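/- Let 0 < λ ≤ 1 and let f ∈ 𝒩(λ), and suppose the analytic function z ↦ f(z)/z (extended by value 1 at z = 0) is not identically 1. Then there exists an integer n ≥ 1 such that f(z)/z ≺ (1 + z^n)^{λ/n} on 𝔻. -/

import Mathlib

/-!
Put `g(z) = f(z)/z`; the hypothesis on `f` reads `Re (z g'/g) < λ/2`. With `L` a holomorphic
logarithm of `g`, the function `H = exp (L/λ)` (a branch of `g^(1/λ)`) satisfies
`Re (z H'/H) < 1/2`. Jack's lemma then gives `|H - 1| < 1`: at a point `z₀` of smallest modulus
with `|H(z₀) - 1| = 1`, the Schwarz lemma and the maximality of `|H - 1|` on the circle through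
`z₀` force `z₀ H'(z₀) = k (H(z₀) - 1)` with `k ≥ 1`, whence `Re (z₀ H'/H) = k/2 ≥ 1/2`. So
`ω = H - 1` maps `𝔻` into `𝔻` with `ω 0 = 0`, and `g = (1 + ω)^λ`: the claim holds with `n = 1`.
-/

open Complex Metric

/-- `p ≺ q` on the unit disk: there is an analytic `ω : 𝔻 → 𝔻` with `ω 0 = 0`
and `p = q ∘ ω` on `𝔻`. -/
def Subord (p q : ℂ → ℂ) : Prop :=
  ∃ ω : ℂ → ℂ, DifferentiableOn ℂ ω (ball 0 1) ∧
    Set.MapsTo ω (ball 0 1) (ball 0 1) ∧ ω 0 = 0 ∧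
    ∀ z ∈ ball (0:ℂ) 1, p z = q (ω z)

open Set Filter Topology ComplexConjugate

theorem HasDerivAt.le_of_le_on_Icc {u φ : ℝ → ℝ} {u' φ' a b : ℝ} (hu : HasDerivAt u u' b)
    (hφ : HasDerivAt φ φ' b) (hab : a < b) (hle : ∀ t ∈ Icc a b, u t ≤ φ t) (heq : u b = φ b) :
    φ' ≤ u' := by
  have hmin : IsMinOn (fun t => φ t - u t) (Icc a b) b := fun t ht => by
    simp only [mem_ofPred_eq, heq, sub_self, sub_nonneg]
    exact hle t ht
  have hcone : a - b ∈ posTangentConeAt (Icc a b) b :=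
    sub_mem_posTangentConeAt_of_segment_subset (by rw [segment_symm, segment_eq_Icc hab.le])
  have := hmin.localize.hasFDerivWithinAt_nonneg (hφ.sub hu).hasFDerivAt.hasFDerivWithinAt hcone
  rw [ContinuousLinearMap.toSpanSingleton_apply, smul_eq_mul] at this
  nlinarith

theorem hasDerivAt_norm_sq_comp {w : ℂ → ℂ} {γ : ℝ → ℂ} {w' γ' z : ℂ} {t : ℝ}
    (hw : HasDerivAt w w' z) (hγ : HasDerivAt γ γ' t) (hγt : γ t = z) :
    HasDerivAt (fun s => ‖w (γ s)‖ ^ 2) (2 * (conj (w z) * (w' * γ')).re) t := by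
  subst hγt
  simpa [Complex.inner, mul_comm] using (hw.comp t hγ).norm_sq

theorem exists_norm_eq_isMaxOn_closedBall {E F : Type*} [NormedAddCommGroup E] [NormedSpace ℝ E]
    [ProperSpace E] [SeminormedAddCommGroup F] {w : E → F} {R ρ : ℝ}
    (hw : ContinuousOn w (ball 0 R)) (h0 : ‖w 0‖ < ρ) {z₁ : E} (hz₁ : z₁ ∈ ball 0 R)
    (hρ : ρ ≤ ‖w z₁‖) :
    ∃ z₀ ∈ ball (0 : E) R, ‖w z₀‖ = ρ ∧ IsMaxOn (‖w ·‖) (closedBall 0 ‖z₀‖) z₀ := by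
  have hsub : closedBall (0 : E) ‖z₁‖ ⊆ ball 0 R :=
    closedBall_subset_ball (mem_ball_zero_iff.1 hz₁)
  -- `z₀` is a point of smallest norm where `‖w‖` reaches `ρ`
  set S := closedBall (0 : E) ‖z₁‖ ∩ (‖w ·‖) ⁻¹' Ici ρ
  have hS : IsCompact S := (isCompact_closedBall 0 ‖z₁‖).of_isClosed_subset
    ((hw.mono hsub).norm.preimage_isClosed_of_isClosed isClosed_closedBall isClosed_Ici)
    inter_subset_left
  obtain ⟨z₀, ⟨hz₀₁, hz₀ρ⟩, hmin⟩ := hS.exists_isMinOn ⟨z₁, mem_closedBall_zero_iff.2 le_rfl, hρ⟩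
    continuous_norm.continuousOn
  rw [mem_closedBall_zero_iff] at hz₀₁
  have hlt : ∀ z ∈ ball (0 : E) ‖z₀‖, ‖w z‖ < ρ := fun z hz => by
    by_contra! h
    have := hmin ⟨mem_closedBall_zero_iff.2 ((mem_ball_zero_iff.1 hz).le.trans hz₀₁), h⟩
    exact (mem_ball_zero_iff.1 hz).not_ge this
  have hz₀ : z₀ ≠ 0 := by rintro rfl; exact (h0.trans_le hz₀ρ).false
  have hle : ∀ z ∈ closedBall (0 : E) ‖z₀‖, ‖w z‖ ≤ ρ := by
    have hclosed : IsClosed (closedBall (0 : E) ‖z₀‖ ∩ (‖w ·‖) ⁻¹' Iic ρ) :=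
      (hw.mono ((closedBall_subset_closedBall hz₀₁).trans hsub)).norm.preimage_isClosed_of_isClosed
        isClosed_closedBall isClosed_Iic
    rw [← closure_ball 0 (norm_ne_zero_iff.2 hz₀)]
    exact fun z hz => (hclosed.closure_subset_iff.2
      (fun y hy => ⟨ball_subset_closedBall hy, (hlt y hy).le⟩) hz).2
  exact ⟨z₀, hsub (mem_closedBall_zero_iff.2 hz₀₁),
    le_antisymm (hle z₀ (mem_closedBall_zero_iff.2 le_rfl)) hz₀ρ, fun z hz => (hle z hz).trans hz₀ρ⟩

theorem exists_mul_deriv_eq_of_isMaxOn_norm {w : ℂ → ℂ} {z₀ : ℂ} {R : ℝ}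
    (hw : DifferentiableOn ℂ w (ball 0 R)) (hz₀R : ‖z₀‖ < R) (hw0 : w 0 = 0) (hwz₀ : w z₀ ≠ 0)
    (hmax : IsMaxOn (‖w ·‖) (closedBall 0 ‖z₀‖) z₀) :
    ∃ k : ℝ, 1 ≤ k ∧ z₀ * deriv w z₀ = k * w z₀ := by
  set a := w z₀
  set r := ‖z₀‖
  have ha : 0 < ‖a‖ := norm_pos_iff.2 hwz₀
  have hr : 0 < r := norm_pos_iff.2 fun h => hwz₀ (h ▸ hw0)
  have hw' : HasDerivAt w (deriv w z₀) z₀ :=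
    (hw.differentiableAt (isOpen_ball.mem_nhds (mem_ball_zero_iff.2 hz₀R))).hasDerivAt
  have schwarz : ∀ z ∈ ball (0 : ℂ) r, ‖w z‖ ≤ ‖a‖ / r * ‖z‖ := fun z hz => by
    have hmaps : MapsTo w (ball 0 r) (closedBall (w 0) ‖a‖) := fun y hy => by
      simpa [hw0] using hmax (ball_subset_closedBall hy)
    simpa [hw0] using
      dist_le_div_mul_dist_of_mapsTo_ball (hw.mono (ball_subset_ball hz₀R.le)) hmaps hz
  set ζ := conj a * (deriv w z₀ * z₀)
  -- radially, `‖w (t z₀)‖ ≤ ‖a‖ t` with equality at `t = 1`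
  have hre : ‖a‖ ^ 2 ≤ ζ.re := by
    have hγ : HasDerivAt (fun t : ℝ => (t : ℂ) * z₀) z₀ 1 := by
      simpa using (hasDerivAt_id (1 : ℝ)).ofReal_comp.mul_const z₀
    have hu := hasDerivAt_norm_sq_comp hw' hγ (by simp)
    have hφ : HasDerivAt (fun t : ℝ => ‖a‖ ^ 2 * t ^ 2) (‖a‖ ^ 2 * 2) 1 := by
      simpa using (hasDerivAt_pow 2 (1 : ℝ)).const_mul (‖a‖ ^ 2)
    have := hu.le_of_le_on_Icc hφ zero_lt_one (fun t ht => ?_) (by simp [a])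
    · linarith
    rcases ht.2.lt_or_eq with ht1 | rfl
    · have hmem : (t : ℂ) * z₀ ∈ ball (0 : ℂ) r := by
        rw [mem_ball_zero_iff, norm_mul, norm_real, Real.norm_of_nonneg ht.1]
        exact mul_lt_of_lt_one_left hr ht1
      have := schwarz _ hmem
      rw [norm_mul, norm_real, Real.norm_of_nonneg ht.1] at this
      calc ‖w (t * z₀)‖ ^ 2 ≤ (‖a‖ / r * (t * r)) ^ 2 := by gcongr
        _ = ‖a‖ ^ 2 * t ^ 2 := by field_simp
    · simp [a]
  -- tangentially, `‖w‖` is maximal at `z₀` on the circle of radius `r`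
  have him : ζ.im = 0 := by
    have hγ : HasDerivAt (fun s : ℝ => exp (s * I) * z₀) (I * z₀) 0 := by
      simpa using (((hasDerivAt_id (0 : ℝ)).ofReal_comp.mul_const I).cexp).mul_const z₀
    have hv := hasDerivAt_norm_sq_comp hw' hγ (by simp)
    have hmax' : IsLocalMax (fun s : ℝ => ‖w (exp (s * I) * z₀)‖ ^ 2) 0 :=
      Eventually.of_forall fun s => by
        have := isMaxOn_iff.1 hmax (exp (s * I) * z₀) (by simp [r])
        dsimp only
        simp only [ofReal_zero, zero_mul, exp_zero, one_mul]
        gcongr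
    have := hmax'.hasDerivAt_eq_zero hv
    simp only [ζ, mul_re, mul_im, conj_re, conj_im, I_re, I_im] at this ⊢
    linarith
  refine ⟨ζ.re / ‖a‖ ^ 2, (one_le_div (by positivity)).2 hre, ?_⟩
  have hζ : (ζ.re : ℂ) = ζ := Complex.ext rfl (by simp [him])
  have hζa : ζ * a = (‖a‖ ^ 2 : ℝ) * (z₀ * deriv w z₀) := by
    rw [ofReal_pow, ← conj_mul']
    ring
  rw [ofReal_div, hζ, div_mul_eq_mul_div, hζa, mul_div_cancel_left₀]
  exact ofReal_ne_zero.2 (by positivity)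

theorem re_div_one_add_eq_half {a : ℂ} (ha : ‖a‖ = 1) (ha' : 1 + a ≠ 0) :
    (a / (1 + a)).re = 1 / 2 := by
  have hsq : a.re * a.re + a.im * a.im = 1 := by
    rw [← normSq_apply, normSq_eq_norm_sq, ha, one_pow]
  have hpos : normSq (1 + a) ≠ 0 := normSq_eq_zero.not.2 ha'
  rw [div_re, ← add_div, div_eq_iff hpos, normSq_apply]
  simp only [add_re, one_re, add_im, one_im, zero_add]
  linear_combination (1/2 : ℝ) * hsq

theorem norm_sub_one_lt_one_of_re_mul_logDeriv_lt {H : ℂ → ℂ} {R : ℝ}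
    (hH : DifferentiableOn ℂ H (ball 0 R)) (h0 : H 0 = 1) (hne : ∀ z ∈ ball (0 : ℂ) R, H z ≠ 0)
    (hre : ∀ z ∈ ball (0 : ℂ) R, (z * logDeriv H z).re < 1 / 2) :
    ∀ z ∈ ball (0 : ℂ) R, ‖H z - 1‖ < 1 := by
  by_contra! ⟨z₁, hz₁, h1⟩
  have hw : DifferentiableOn ℂ (H · - 1) (ball 0 R) := hH.sub_const 1
  obtain ⟨z₀, hz₀, hnorm, hmax⟩ :=
    exists_norm_eq_isMaxOn_closedBall hw.continuousOn (by simp [h0]) hz₁ h1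
  obtain ⟨k, hk, hkz₀⟩ := exists_mul_deriv_eq_of_isMaxOn_norm hw (mem_ball_zero_iff.1 hz₀)
    (by simp [h0]) (norm_ne_zero_iff.1 (hnorm ▸ one_ne_zero)) hmax
  have hderiv : deriv (H · - 1) z₀ = deriv H z₀ := deriv_sub_const 1
  have hJack : z₀ * logDeriv H z₀ = k * ((H z₀ - 1) / (1 + (H z₀ - 1))) := by
    rw [logDeriv_apply, ← mul_div_assoc, ← hderiv, hkz₀, add_sub_cancel, mul_div_assoc]
  have := hre z₀ hz₀
  rw [hJack, re_ofReal_mul, re_div_one_add_eq_half hnorm (by simpa using hne z₀ hz₀)] at this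
  linarith

theorem exists_log_of_differentiableOn_ball {g : ℂ → ℂ} {c : ℂ} {r : ℝ}
    (hg : DifferentiableOn ℂ g (ball c r)) (hne : ∀ z ∈ ball c r, g z ≠ 0) :
    ∃ L : ℂ → ℂ, L c = log (g c) ∧
      ∀ z ∈ ball c r, HasDerivAt L (logDeriv g z) z ∧ exp (L z) = g z := by
  have hlog : DifferentiableOn ℂ (logDeriv g) (ball c r) :=
    (hg.deriv isOpen_ball).div hg hne
  obtain ⟨L, hLc, hL⟩ := hlog.isExactOn_ball.with_val_at c (log (g c))
  refine ⟨L, hLc, fun z hz => ⟨hL z hz, ?_⟩⟩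
  have hc : c ∈ ball c r := mem_ball_self (pos_of_mem_ball hz)
  have hexp : DifferentiableOn ℂ (exp ∘ L) (ball c r) := fun y hy =>
    (hL y hy).differentiableAt.cexp.differentiableWithinAt
  obtain ⟨a, -, ha⟩ := (logDeriv_eqOn_iff hexp hg isOpen_ball (convex_ball c r).isPreconnected
    hne (fun _ _ => exp_ne_zero _)).1 fun y hy => by
      rw [logDeriv_comp differentiableAt_exp (hL y hy).differentiableAt, logDeriv_exp,
        (hL y hy).deriv, Pi.one_apply, one_mul]
  have ha1 : a = 1 := by
    have := ha hc
    simp only [Function.comp_apply, hLc, exp_log (hne c hc), Pi.smul_apply, smul_eq_mul] at this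
    exact (mul_eq_right₀ (hne c hc)).1 this.symm
  simpa [ha1] using ha hz

theorem log_exp_eqOn {K : ℂ → ℂ} {s : Set ℂ} (hs : IsOpen s) (hs' : IsPreconnected s)
    (hK : DifferentiableOn ℂ K s) (hslit : ∀ z ∈ s, exp (K z) ∈ slitPlane) {c : ℂ} (hc : c ∈ s)
    (hKc : log (exp (K c)) = K c) :
    EqOn (fun z => log (exp (K z))) K s := by
  have hderiv : ∀ z ∈ s, HasDerivAt (fun z => log (exp (K z))) (deriv K z) z := fun z hz => by
    have hKz := (hK.differentiableAt (hs.mem_nhds hz)).hasDerivAt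
    simpa [mul_div_cancel_left₀ _ (exp_ne_zero _)] using hKz.cexp.clog (hslit z hz)
  exact hs.eqOn_of_deriv_eq hs' (fun z hz => (hderiv z hz).differentiableAt.differentiableWithinAt)
    hK (fun z hz => (hderiv z hz).deriv) hc hKc

theorem eqOn_dslope_of_eq_div {f g : ℂ → ℂ} {s : Set ℂ} (hf0 : f 0 = 0) (hg0 : g 0 = deriv f 0)
    (hgval : ∀ z ∈ s, z ≠ 0 → g z = f z / z) : EqOn g (dslope f 0) s := by
  intro z hz
  rcases eq_or_ne z 0 with rfl | hz0
  · rw [dslope_same, hg0]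
  · rw [hgval z hz hz0, dslope_of_ne f hz0, slope_def_field, hf0, sub_zero, sub_zero]

theorem mul_logDeriv_eq_sub_one_of_eventuallyEq_div {f g : ℂ → ℂ} {z : ℂ} (hz : z ≠ 0)
    (hf : DifferentiableAt ℂ f z) (hfz : f z ≠ 0) (hg : g =ᶠ[𝓝 z] fun w => f w / w) :
    z * logDeriv g z = z * logDeriv f z - 1 := by
  rw [(logDeriv_congr_nhds hg).eq_of_nhds,
    logDeriv_div (g := fun w => w) z hfz hz hf differentiableAt_id, logDeriv_id']
  field_simp

theorem subord_exp_mul_log_one_add {g : ℂ → ℂ} {lam : ℝ} (hlam : 0 < lam)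
    (hg : DifferentiableOn ℂ g (ball 0 1)) (hg0 : g 0 = 1) (hne : ∀ z ∈ ball (0 : ℂ) 1, g z ≠ 0)
    (hre : ∀ z ∈ ball (0 : ℂ) 1, (z * logDeriv g z).re < lam / 2) :
    Subord g (fun z => exp (lam * log (1 + z))) := by
  obtain ⟨L, hL0, hL⟩ := exists_log_of_differentiableOn_ball hg hne
  rw [hg0, log_one] at hL0
  set H := fun z => exp (L z / lam)
  have hH : ∀ z ∈ ball (0 : ℂ) 1, HasDerivAt H (H z * (logDeriv g z / lam)) z := fun z hz =>
    ((hL z hz).1.div_const _).cexp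
  have hHd : DifferentiableOn ℂ H (ball 0 1) := fun z hz =>
    (hH z hz).differentiableAt.differentiableWithinAt
  have hHre : ∀ z ∈ ball (0 : ℂ) 1, (z * logDeriv H z).re < 1 / 2 := fun z hz => by
    rw [logDeriv_apply, (hH z hz).deriv, mul_div_cancel_left₀ _ (exp_ne_zero _), ← mul_div_assoc,
      div_ofReal_re, div_lt_iff₀ hlam]
    linarith [hre z hz]
  have hω := norm_sub_one_lt_one_of_re_mul_logDeriv_lt hHd (by simp [H, hL0])
    (fun _ _ => exp_ne_zero _) hHre
  have hslit : ∀ z ∈ ball (0 : ℂ) 1, H z ∈ slitPlane := fun z hz => by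
    simpa using mem_slitPlane_of_norm_lt_one (hω z hz)
  have hlog : ∀ z ∈ ball (0 : ℂ) 1, log (1 + (H z - 1)) = L z / lam := fun z hz => by
    rw [add_sub_cancel]
    exact log_exp_eqOn isOpen_ball (convex_ball 0 1).isPreconnected
      (fun y hy => ((hL y hy).1.div_const _).differentiableAt.differentiableWithinAt) hslit
      (mem_ball_self one_pos) (by simp [hL0]) hz
  refine ⟨(H · - 1), hHd.sub_const 1, fun z hz => mem_ball_zero_iff.2 (hω z hz),
    by simp [H, hL0], fun z hz => ?_⟩
  dsimp only
  rw [hlog z hz, mul_div_cancel₀ _ (ofReal_ne_zero.2 hlam.ne'), (hL z hz).2]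

theorem stmt4_general (lam : ℝ) (hlam0 : 0 < lam)
    (f : ℂ → ℂ)
    (hf : DifferentiableOn ℂ f (ball 0 1))
    (hf0 : f 0 = 0) (hfd0 : deriv f 0 = 1)
    (hfne : ∀ z ∈ ball (0:ℂ) 1, z ≠ 0 → f z ≠ 0)
    (hN : ∀ z ∈ ball (0:ℂ) 1, (z * deriv f z / f z).re < 1 + lam / 2)
    (g : ℂ → ℂ)
    (hg0 : g 0 = 1)
    (hgval : ∀ z ∈ ball (0:ℂ) 1, z ≠ 0 → g z = f z / z) :
    ∃ n : ℕ, 1 ≤ n ∧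
      Subord g (fun z => Complex.exp (((lam / n : ℝ) : ℂ) * Complex.log (1 + z ^ n))) := by
  have hgf : EqOn g (dslope f 0) (ball 0 1) :=
    eqOn_dslope_of_eq_div hf0 (hg0.trans hfd0.symm) hgval
  have hg : DifferentiableOn ℂ g (ball 0 1) :=
    ((differentiableOn_dslope (ball_mem_nhds 0 one_pos)).2 hf).congr hgf
  have hne : ∀ z ∈ ball (0 : ℂ) 1, g z ≠ 0 := fun z hz => by
    rcases eq_or_ne z 0 with rfl | hz0
    · simp [hg0]
    · rw [hgval z hz hz0]
      exact div_ne_zero (hfne z hz hz0) hz0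
  have hre : ∀ z ∈ ball (0 : ℂ) 1, (z * logDeriv g z).re < lam / 2 := fun z hz => by
    rcases eq_or_ne z 0 with rfl | hz0
    · simpa using hlam0
    have hgz : g =ᶠ[𝓝 z] fun w => f w / w :=
      Eventually.mono ((isOpen_ball.inter isOpen_ne).mem_nhds ⟨hz, hz0⟩)
        fun w hw => hgval w hw.1 hw.2
    rw [mul_logDeriv_eq_sub_one_of_eventuallyEq_div hz0
      (hf.differentiableAt (isOpen_ball.mem_nhds hz)) (hfne z hz hz0) hgz, sub_re, one_re,
      logDeriv_apply, ← mul_div_assoc]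
    linarith [hN z hz]
  exact ⟨1, le_rfl, by simpa using subord_exp_mul_log_one_add hlam0 hg hg0 hne hre⟩

/-- Let `0 < λ ≤ 1` and `f ∈ 𝒩(λ)`. Let `g` be the analytic function
equal to `f z / z` for `z ≠ 0` and to `1` at `z = 0`, and suppose `g` is not
identically `1` on `𝔻`. Then there is an integer `n ≥ 1` with
`f(z)/z ≺ (1 + z^n)^{λ/n}` on `𝔻`. -/
theorem stmt4 (lam : ℝ) (hlam0 : 0 < lam) (hlam1 : lam ≤ 1)
    (f : ℂ → ℂ)
    (hf : DifferentiableOn ℂ f (ball 0 1))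
    (hf0 : f 0 = 0) (hfd0 : deriv f 0 = 1)
    (hfne : ∀ z ∈ ball (0:ℂ) 1, z ≠ 0 → f z ≠ 0)
    (hN : ∀ z ∈ ball (0:ℂ) 1, (z * deriv f z / f z).re < 1 + lam / 2)
    (g : ℂ → ℂ)
    (hg0 : g 0 = 1)
    (hgval : ∀ z ∈ ball (0:ℂ) 1, z ≠ 0 → g z = f z / z)
    (hgne1 : ¬ (∀ z ∈ ball (0:ℂ) 1, g z = 1)) :
    ∃ n : ℕ, 1 ≤ n ∧
      Subord g (fun z => Complex.exp (((lam / n : ℝ) : ℂ) * Complex.log (1 + z ^ n))) :=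
  stmt4_general lam hlam0 f hf hf0 hfd0 hfne hN g hg0 hgval
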